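/- For every n ≥ 1, the n-controlled Z gate, namely the diagonal 2^{n+1} × 2^{n+1} matrix acting on basis states |x₁,…,x_{n+1}⟩ by the phase (−1)^{x₁·x₂·⋯·x_{n+1}} (so in particular the CCZ gate diag(1,1,1,1,1,1,1,−1) for n = 2), belongs to the Clifford+Triangle fragment. -/
import Mathlib


noncomputable section

/-- Matrices of size `2^m × 2^n`, indexed by bit strings. -/
abbrev QMat (m n : ℕ) := Matrix (Fin m → Fin 2) (Fin n → Fin 2) ℂ

/-- The Hadamard matrix `(1/√2)[[1,1],[1,-1]]` as a `2×2` generator. -/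
def hadM : QMat 1 1 :=
  fun x y => if x 0 = 1 ∧ y 0 = 1 then -((Real.sqrt 2 : ℝ) : ℂ)⁻¹ else ((Real.sqrt 2 : ℝ) : ℂ)⁻¹

/-- The triangle matrix `[[1,1],[0,1]]` as a `2×2` generator. -/
def triM : QMat 1 1 :=
  fun x y => if x 0 = 1 ∧ y 0 = 0 then 0 else 1

/-- The swap matrix on `ℂ²⊗ℂ²`. -/
def swapM : QMat 2 2 :=
  fun x y => if x 0 = y 1 ∧ x 1 = y 0 then 1 else 0

/-- The Z-spider `Z_k^{m,n} = |0⟩^{⊗m}⟨0|^{⊗n} + i^k |1⟩^{⊗m}⟨1|^{⊗n}`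
(phase an integer multiple of π/2). -/
def zSpider (k : ℤ) (m n : ℕ) : QMat m n :=
  fun x y =>
    (if (∀ i, x i = 0) ∧ (∀ j, y j = 0) then 1 else 0) +
      Complex.I ^ k * (if (∀ i, x i = 1) ∧ (∀ j, y j = 1) then 1 else 0)

/-- Kronecker (tensor) product of matrices on qubit registers. -/
def kronM {m n p q : ℕ} (A : QMat m n) (B : QMat p q) : QMat (m + p) (n + q) :=
  fun x y =>
    A (fun i => x (Fin.castAdd p i)) (fun j => y (Fin.castAdd q j)) *
      B (fun i => x (Fin.natAdd m i)) (fun j => y (Fin.natAdd n j))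

/-- The Clifford+Triangle fragment: the smallest family of matrices containing the
Hadamard matrix, the triangle matrix, the swap matrix and all Z-spiders with phases
integer multiples of π/2, closed under composition and Kronecker product. -/
inductive CliffordTriangle : {m n : ℕ} → QMat m n → Prop
  | had : CliffordTriangle hadM
  | tri : CliffordTriangle triM
  | swap : CliffordTriangle swapM
  | zspider (k : ℤ) (m n : ℕ) : CliffordTriangle (zSpider k m n)
  | mul {m n p : ℕ} {A : QMat m n} {B : QMat n p} :
      CliffordTriangle A → CliffordTriangle B → CliffordTriangle (A * B)
  | kron {m n p q : ℕ} {A : QMat m n} {B : QMat p q} :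
      CliffordTriangle A → CliffordTriangle B → CliffordTriangle (kronM A B)

/-- The `n`-controlled Z gate on `n+1` qubits: the diagonal matrix acting on
basis states `|x₁,…,x_{n+1}⟩` by the phase `(−1)^{x₁⋯x_{n+1}}`. -/
def nControlledZ (n : ℕ) : QMat (n + 1) (n + 1) :=
  fun x y => if x = y then (if ∀ i, x i = 1 then -1 else 1) else 0
namespace CT
open Matrix Finset

/-- "functional" matrices -/
lemma ite_mul_ite (P Q : Prop) [Decidable P] [Decidable Q] :
    (if P then (1:ℂ) else 0) * (if Q then 1 else 0) = if P ∧ Q then 1 else 0 := by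
  split_ifs <;> simp_all

lemma diag_mul_diag (P Q : Prop) [Decidable P] [Decidable Q] (a b : ℂ) :
    (if P then a else 0) * (if Q then b else 0) = if P ∧ Q then a * b else 0 := by
  split_ifs <;> simp_all

lemma ite_cond_congr {P Q : Prop} [Decidable P] [Decidable Q] (h : P ↔ Q) {a b : ℂ} :
    (if P then a else b) = if Q then a else b := by simp [h]

def funM {m n : ℕ} (g : (Fin n → Fin 2) → (Fin m → Fin 2)) : QMat m n :=
  fun x y => if x = g y then 1 else 0

def diagM {n : ℕ} (d : (Fin n → Fin 2) → ℂ) : QMat n n :=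
  fun x y => if x = y then d x else 0

lemma funM_one {n : ℕ} : funM (id : (Fin n → Fin 2) → (Fin n → Fin 2)) = (1 : QMat n n) := by
  funext x y
  simp [funM, Matrix.one_apply]

lemma mul_funM {m n p : ℕ} (A : QMat m n) (g : (Fin p → Fin 2) → (Fin n → Fin 2)) :
    ∀ x y, (A * funM g) x y = A x (g y) := by
  intro x y
  simp [Matrix.mul_apply, funM, mul_ite, mul_one, mul_zero]

lemma funMT_mul {m n p : ℕ} (g : (Fin n → Fin 2) → (Fin m → Fin 2)) (B : QMat m p) :
    ∀ x y, ((funM g)ᵀ * B) x y = B (g x) y := by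
  intro x y
  simp [Matrix.mul_apply, funM, Matrix.transpose_apply, ite_mul, one_mul, zero_mul]

lemma funM_mul {m n p : ℕ} (g : (Fin n → Fin 2) → (Fin m → Fin 2))
    (h : (Fin p → Fin 2) → (Fin n → Fin 2)) :
    funM g * funM h = funM (g ∘ h) := by
  funext x y
  rw [mul_funM]
  rfl

lemma split_eq_append {m p : ℕ} (x : Fin (m + p) → Fin 2) (u : Fin m → Fin 2) (v : Fin p → Fin 2) :
    ((fun i => x (Fin.castAdd p i)) = u ∧ (fun i => x (Fin.natAdd m i)) = v) ↔
      x = Fin.append u v := by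
  constructor
  · rintro ⟨h1, h2⟩
    funext i
    refine Fin.addCases (fun j => ?_) (fun j => ?_) i
    · rw [Fin.append_left]; exact congrFun h1 j
    · rw [Fin.append_right]; exact congrFun h2 j
  · rintro rfl
    constructor <;> funext j <;> simp [Fin.append_left, Fin.append_right]

lemma kron_funM {m n p q : ℕ} (g : (Fin n → Fin 2) → (Fin m → Fin 2))
    (h : (Fin q → Fin 2) → (Fin p → Fin 2)) :
    kronM (funM g) (funM h) = funM (fun y =>
      Fin.append (g (fun j => y (Fin.castAdd q j))) (h (fun j => y (Fin.natAdd n j)))) := by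
  funext x y
  simp only [kronM, funM]
  rw [ite_mul_ite, ite_cond_congr (split_eq_append x _ _)]

lemma sandwich {m n : ℕ} (g : (Fin n → Fin 2) → (Fin m → Fin 2)) (hg : Function.Injective g)
    (d : (Fin m → Fin 2) → ℂ) :
    (funM g)ᵀ * (diagM d * funM g) = diagM (fun x => d (g x)) := by
  funext x y
  rw [funMT_mul, mul_funM]
  simp only [diagM, hg.eq_iff]

lemma kron_diag {m p : ℕ} (d : (Fin m → Fin 2) → ℂ) (e : (Fin p → Fin 2) → ℂ) :
    kronM (diagM d) (diagM e) = diagM (fun x =>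
      d (fun i => x (Fin.castAdd p i)) * e (fun i => x (Fin.natAdd m i))) := by
  funext x y
  simp only [kronM, diagM]
  rw [diag_mul_diag, ite_cond_congr ((split_eq_append x _ _).trans
    (by rw [Fin.append_castAdd_natAdd]))]

end CT
namespace CT
open Matrix Finset

lemma sum_one (f : (Fin 1 → Fin 2) → ℂ) : ∑ x, f x = f ![0] + f ![1] := by
  rw [← Equiv.sum_comp ((Equiv.funUnique (Fin 1) (Fin 2)).symm) f, Fin.sum_univ_two]
  congr 1 <;> exact congrArg f (by decide)

lemma sum_two (f : (Fin 2 → Fin 2) → ℂ) :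
    ∑ x, f x = f ![0,0] + f ![0,1] + (f ![1,0] + f ![1,1]) := by
  rw [← Equiv.sum_comp ((piFinTwoEquiv (fun _ => Fin 2)).symm) f, Fintype.sum_prod_type,
    Fin.sum_univ_two, Fin.sum_univ_two, Fin.sum_univ_two]
  have h : ∀ a b : Fin 2, (piFinTwoEquiv (fun _ => Fin 2)).symm (a, b) = ![a, b] := by decide
  rw [h, h, h, h]

lemma vec1_cases (x : Fin 1 → Fin 2) : x = ![0] ∨ x = ![1] := by revert x; decide
lemma vec2_cases (x : Fin 2 → Fin 2) :
    x = ![0,0] ∨ x = ![0,1] ∨ x = ![1,0] ∨ x = ![1,1] := by revert x; decide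

lemma Ipow2 : Complex.I ^ (2:ℤ) = -1 := by
  rw [show (2:ℤ) = ((2:ℕ):ℤ) from rfl, zpow_natCast, sq, Complex.I_mul_I]

lemma rt2' : ((Real.sqrt 2 : ℝ) : ℂ) ^ 2 = 2 := by
  rw [← Complex.ofReal_pow, Real.sq_sqrt (by norm_num)]
  norm_num

lemma rt2 : ((Real.sqrt 2 : ℝ) : ℂ)⁻¹ * ((Real.sqrt 2 : ℝ) : ℂ)⁻¹ = (2:ℂ)⁻¹ := by
  rw [← mul_inv, ← Complex.ofReal_mul, Real.mul_self_sqrt (by norm_num)]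
  norm_num

def notF : (Fin 1 → Fin 2) → (Fin 1 → Fin 2) := fun y => ![y 0 + 1]

lemma xM_eq : hadM * (zSpider 2 1 1 * hadM) = funM notF := by
  funext x y
  rcases vec1_cases x with rfl | rfl <;> rcases vec1_cases y with rfl | rfl <;>
    simp (config := { decide := true }) [Matrix.mul_apply, sum_one, hadM, zSpider, funM, notF,
      Ipow2] <;> ring_nf <;> norm_num [rt2']

end CT
namespace CT
open Matrix Finset

lemma ca0 : Fin.castAdd 1 (0 : Fin 1) = (0 : Fin 2) := rfl
lemma na0 : Fin.natAdd 1 (0 : Fin 1) = (1 : Fin 2) := rfl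

lemma id1_eq : zSpider 0 1 1 = funM (id : (Fin 1 → Fin 2) → _) := by
  funext x y
  rcases vec1_cases x with rfl | rfl <;> rcases vec1_cases y with rfl | rfl <;>
    simp (config := { decide := true }) [zSpider, funM]

lemma swap_eq : swapM = funM (fun y : Fin 2 → Fin 2 => ![y 1, y 0]) := by
  funext x y
  rcases vec2_cases x with rfl | rfl | rfl | rfl <;> rcases vec2_cases y with rfl | rfl | rfl | rfl <;>
    simp (config := { decide := true }) [swapM, funM]

def cpF : (Fin 1 → Fin 2) → (Fin 2 → Fin 2) := fun y => ![y 0, y 0]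

lemma cp_eq : zSpider 0 2 1 = funM cpF := by
  funext x y
  rcases vec2_cases x with rfl | rfl | rfl | rfl <;> rcases vec1_cases y with rfl | rfl <;>
    simp (config := { decide := true }) [zSpider, funM, cpF]

lemma one0_eq : zSpider 2 0 1 * (triM * zSpider 2 1 0) = (1 : QMat 0 0) := by
  funext x y
  have hxy : x = y := Subsingleton.elim x y
  subst hxy
  simp (config := { decide := true }) [Matrix.mul_apply, sum_one, zSpider, triM, Ipow2,
    Matrix.one_apply]

lemma notF_symm : funM notF = (funM notF)ᵀ := by
  funext x y
  rcases vec1_cases x with rfl | rfl <;> rcases vec1_cases y with rfl | rfl <;>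
    simp (config := { decide := true }) [funM, notF, Matrix.transpose_apply]

lemma triT_eq : triMᵀ = funM notF * (triM * funM notF) := by
  funext x y
  rw [show funM notF * (triM * funM notF) = (funM notF)ᵀ * (triM * funM notF) from by
    rw [← notF_symm]]
  rw [funMT_mul, mul_funM]
  rcases vec1_cases x with rfl | rfl <;> rcases vec1_cases y with rfl | rfl <;>
    simp (config := { decide := true }) [triM, notF, Matrix.transpose_apply]

def andF : (Fin 2 → Fin 2) → (Fin 1 → Fin 2) := fun y => ![y 0 * y 1]

lemma and2_eq :
    (zSpider 2 1 1 * (triM * zSpider 2 1 1)) * (zSpider 0 1 2 * kronM triM triM) = funM andF := by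
  funext x y
  rcases vec1_cases x with rfl | rfl <;> rcases vec2_cases y with rfl | rfl | rfl | rfl <;>
    simp (config := { decide := true }) [Matrix.mul_apply, sum_one, sum_two, zSpider, triM,
      kronM, funM, andF, Ipow2, ca0, na0]

end CT
namespace CT
open Matrix Finset

def wF : (Fin 2 → Fin 2) → (Fin 3 → Fin 2) := fun y => ![y 0 * y 1, y 0, y 1]

lemma w_eq :
    kronM ((zSpider 2 1 1 * (triM * zSpider 2 1 1)) * (zSpider 0 1 2 * kronM triM triM))
        (1 : QMat 2 2) *
      (kronM (kronM (1 : QMat 1 1) swapM) (1 : QMat 1 1) *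
        kronM (zSpider 0 2 1) (zSpider 0 2 1)) = funM wF := by
  rw [and2_eq, cp_eq, swap_eq, ← funM_one (n := 2), ← funM_one (n := 1),
    kron_funM, kron_funM, kron_funM, kron_funM, funM_mul, funM_mul]
  exact congrArg funM (by decide)

lemma ct_one : ∀ n, CliffordTriangle (1 : QMat n n) := by
  intro n
  induction n with
  | zero => rw [← one0_eq]; exact .mul (.zspider 2 0 1) (.mul .tri (.zspider 2 1 0))
  | succ n ih =>
    have h1 : CliffordTriangle (1 : QMat 1 1) := by
      rw [← funM_one, ← id1_eq]; exact .zspider 0 1 1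
    have he : (1 : QMat (n+1) (n+1)) = kronM (1 : QMat n n) (1 : QMat 1 1) := by
      rw [← funM_one (n := n), ← funM_one (n := 1), kron_funM, ← funM_one (n := n+1)]
      exact congrArg funM (by funext y; simp [Fin.append_castAdd_natAdd])
    rw [he]; exact .kron ih h1

lemma ct_transpose {m n : ℕ} {A : QMat m n} (h : CliffordTriangle A) : CliffordTriangle Aᵀ := by
  induction h with
  | had =>
    rw [show hadMᵀ = hadM from by funext x y; simp [hadM, Matrix.transpose_apply, and_comm]]
    exact .had
  | tri =>
    have hx : CliffordTriangle (funM notF) :=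
      xM_eq ▸ (.mul .had (.mul (.zspider 2 1 1) .had))
    rw [triT_eq]; exact .mul hx (.mul .tri hx)
  | swap =>
    rw [show swapMᵀ = swapM from by
      funext x y
      rcases vec2_cases x with rfl | rfl | rfl | rfl <;>
        rcases vec2_cases y with rfl | rfl | rfl | rfl <;>
        simp (config := { decide := true }) [swapM, Matrix.transpose_apply]]
    exact .swap
  | zspider k m n =>
    rw [show (zSpider k m n)ᵀ = zSpider k n m from by
      funext x y; simp [zSpider, Matrix.transpose_apply, and_comm]]
    exact .zspider k n m
  | mul _ _ ih1 ih2 => rw [Matrix.transpose_mul]; exact .mul ih2 ih1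
  | kron _ _ ih1 ih2 => exact CliffordTriangle.kron ih1 ih2

lemma ct_funM_wF : CliffordTriangle (funM wF) := by
  rw [← w_eq]
  exact .mul (.kron (.mul (.mul (.zspider 2 1 1) (.mul .tri (.zspider 2 1 1)))
      (.mul (.zspider 0 1 2) (.kron .tri .tri))) (ct_one 2))
    (.mul (.kron (.kron (ct_one 1) .swap) (ct_one 1)) (.kron (.zspider 0 2 1) (.zspider 0 2 1)))

end CT
namespace CT
open Matrix Finset

def GF (n : ℕ) : (Fin (n+2) → Fin 2) → (Fin (n+3) → Fin 2) :=
  fun y => Fin.append (fun i : Fin n => y (Fin.castAdd 2 i)) (wF (fun j => y (Fin.natAdd n j)))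

lemma GF_eq (n : ℕ) : kronM (1 : QMat n n) (funM wF) = funM (GF n) := by
  rw [← funM_one (n := n), kron_funM]
  rfl

lemma wF_succ : ∀ (v : Fin 2 → Fin 2) (j : Fin 2), wF v j.succ = v j := by decide
lemma wF_zero : ∀ (v : Fin 2 → Fin 2), wF v 0 = v 0 * v 1 := by decide
lemma fin2_cases : ∀ j : Fin 2, j = 0 ∨ j = 1 := by decide
lemma fin2_mul_eq_one : ∀ a b : Fin 2, a * b = 1 ↔ a = 1 ∧ b = 1 := by decide

lemma cast_cast {n : ℕ} (j : Fin n) :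
    Fin.castAdd 2 (Fin.castAdd 1 j) = (Fin.castAdd 3 j : Fin (n+3)) := by
  apply Fin.ext; simp

lemma cast_nat {n : ℕ} :
    Fin.castAdd 2 (Fin.natAdd n (0 : Fin 1)) = Fin.natAdd n (0 : Fin 3) := by
  apply Fin.ext; simp

lemma GF_cast {n : ℕ} (y : Fin (n+2) → Fin 2) (j : Fin n) :
    GF n y (Fin.castAdd 3 j) = y (Fin.castAdd 2 j) := by
  simp [GF, Fin.append_left]

lemma GF_nat {n : ℕ} (y : Fin (n+2) → Fin 2) (j : Fin 3) :
    GF n y (Fin.natAdd n j) = wF (fun i => y (Fin.natAdd n i)) j := by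
  simp [GF, Fin.append_right]

lemma GF_inj (n : ℕ) : Function.Injective (GF n) := by
  intro a b h
  funext i
  refine Fin.addCases (fun j => ?_) (fun j => ?_) i
  · have hj := congrFun h (Fin.castAdd 3 j)
    rwa [GF_cast, GF_cast] at hj
  · have hj := congrFun h (Fin.natAdd n j.succ)
    rwa [GF_nat, GF_nat, wF_succ, wF_succ] at hj

lemma GF_cond {n : ℕ} (y : Fin (n+2) → Fin 2) :
    (∀ i : Fin (n+1), GF n y (Fin.castAdd 2 i) = 1) ↔ (∀ i : Fin (n+2), y i = 1) := by
  constructor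
  · intro h i
    refine Fin.addCases (fun j => ?_) (fun j => ?_) i
    · have := h (Fin.castAdd 1 j)
      rwa [cast_cast, GF_cast] at this
    · have := h (Fin.natAdd n 0)
      rw [cast_nat, GF_nat, wF_zero, fin2_mul_eq_one] at this
      rcases fin2_cases j with rfl | rfl
      · exact this.1
      · exact this.2
  · intro h i
    refine Fin.addCases (fun j => ?_) (fun j => ?_) i
    · rw [cast_cast, GF_cast]; exact h _
    · have hj : j = 0 := Subsingleton.elim j 0
      subst hj
      rw [cast_nat, GF_nat, wF_zero, h _, h _]; rfl

lemma key (n : ℕ) :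
    nControlledZ (n+1) =
      (funM (GF n))ᵀ * (kronM (nControlledZ n) (1 : QMat 2 2) * funM (GF n)) := by
  have h2 : (1 : QMat 2 2) = diagM (fun _ => 1) := by
    funext x y
    simp [diagM, Matrix.one_apply]
  have h1 : kronM (nControlledZ n) (1 : QMat 2 2) =
      diagM (fun x : Fin (n+3) → Fin 2 =>
        if ∀ i : Fin (n+1), x (Fin.castAdd 2 i) = 1 then (-1 : ℂ) else 1) := by
    rw [show nControlledZ n = diagM (fun x => if ∀ i, x i = 1 then (-1:ℂ) else 1) from rfl,
      h2, kron_diag]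
    refine congrArg diagM ?_
    funext x
    rw [mul_one]
  rw [h1, sandwich _ (GF_inj n)]
  funext x y
  simp only [nControlledZ, diagM]
  rw [ite_cond_congr (GF_cond x)]

lemma ct_nCZ : ∀ n, CliffordTriangle (nControlledZ n) := by
  intro n
  induction n with
  | zero =>
    rw [show nControlledZ 0 = zSpider 2 1 1 from by
      funext x y
      rcases vec1_cases x with rfl | rfl <;> rcases vec1_cases y with rfl | rfl <;>
        simp (config := { decide := true }) [nControlledZ, zSpider, Ipow2]]
    exact .zspider 2 1 1
  | succ n ih =>
    have hG : CliffordTriangle (funM (GF n)) := GF_eq n ▸ .kron (ct_one n) ct_funM_wF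
    rw [key n]
    exact .mul (ct_transpose hG) (.mul (.kron ih (ct_one 2)) hG)

end CT

/-- For every `n ≥ 1` the `n`-controlled Z gate (in particular the CCZ gate for
`n = 2`) belongs to the Clifford+Triangle fragment. -/
theorem nControlledZ_mem_cliffordTriangle :
    ∀ n : ℕ, 1 ≤ n → CliffordTriangle (nControlledZ n) := by
  intro n _
  exact CT.ct_nCZ n

end
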